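/- arXiv:2310.15756 — 6 statements merged into one kernel-verified Lean document; each statement's English description precedes it below -/
import Mathlib

section
/- Fix λ > 0 and a > 1. For E ∈ (0,1), let s(E) be the unique real number s > λ satisfying (s − λ)·log(s/λ) = a·log(1/E), and set η(E) := ⌊s(E)⌋. Then lim_{E → 0⁺} (log η(E)) / (log log(1/E)) = 1. -/
/-! Since log x ≤ x − 1, the defining equation gives (s − λ)² ≥ λ a log(1/E), so s → ∞.
Taking logarithms, log(s − λ) + log log(s/λ) = log a + log log(1/E), and as s → ∞ the left side
is asymptotic to log s, while the right side is asymptotic to log log(1/E). Finally ⌊s⌋ ~ s, so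
log ⌊s⌋ ~ log s. -/

open Filter Topology Asymptotics Real

theorem isEquivalent_intFloor {R : Type*} [NormedField R] [LinearOrder R] [IsStrictOrderedRing R]
    [OrderTopology R] [FloorRing R] :
    (fun x : R ↦ (⌊x⌋ : R)) ~[atTop] fun x ↦ x :=
  isEquivalent_nat_floor.congr_left <| (eventually_ge_atTop 0).mono fun _ hx ↦
    natCast_floor_eq_intCast_floor hx

theorem isEquivalent_log_const_mul {α : Type*} {l : Filter α} {g : α → ℝ} {c : ℝ} (hc : 0 < c)
    (hg : Tendsto g l atTop) :
    (fun x ↦ log (c * g x)) ~[l] fun x ↦ log (g x) := by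
  have hconst : (fun _ ↦ log c) =o[l] fun x ↦ log (g x) :=
    isLittleO_const_log_atTop.comp_tendsto hg
  refine (IsEquivalent.refl.add_isLittleO hconst).congr_left ?_
  filter_upwards [hg.eventually_gt_atTop 0] with x hx
  rw [Pi.add_apply, log_mul hc.ne' hx.ne', add_comm]

theorem isEquivalent_log_sub_mul_log_div {lam : ℝ} (hlam : 0 < lam) :
    (fun s ↦ log ((s - lam) * log (s / lam))) ~[atTop] log := by
  have hdiv : Tendsto (fun s ↦ lam⁻¹ * s) atTop atTop :=
    tendsto_id.const_mul_atTop (inv_pos.2 hlam)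
  have hlog_sub : (fun s ↦ log (s - lam)) ~[atTop] log :=
    (IsEquivalent.refl.sub_isLittleO (isLittleO_const_id_atTop lam)).log tendsto_id
  have hlog_log : (fun s ↦ log (log (s / lam))) =o[atTop] log := by
    simp only [div_eq_inv_mul]
    exact (isLittleO_log_id_atTop.comp_tendsto (tendsto_log_atTop.comp hdiv)).trans_isBigO
      (isEquivalent_log_const_mul (inv_pos.2 hlam) tendsto_id).isBigO
  refine (hlog_sub.add_isLittleO hlog_log).congr_left ?_
  filter_upwards [eventually_gt_atTop (2 * lam)] with s hs
  have hlog_pos : 0 < log (s / lam) := log_pos <| (one_lt_div hlam).2 (by linarith)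
  exact (log_mul (by linarith) hlog_pos.ne').symm

theorem sqrt_mul_sub_mul_log_div_le {lam s : ℝ} (hlam : 0 < lam) (hs : lam < s) :
    √(lam * ((s - lam) * log (s / lam))) ≤ s - lam := by
  have hlog : log (s / lam) ≤ (s - lam) / lam := by
    have := log_le_sub_one_of_pos (div_pos (hlam.trans hs) hlam)
    rwa [div_sub_one hlam.ne'] at this
  rw [sqrt_le_left (by linarith)]
  calc lam * ((s - lam) * log (s / lam)) ≤ lam * ((s - lam) * ((s - lam) / lam)) := by
        gcongr
    _ = (s - lam) ^ 2 := by field_simp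

theorem log_floor_solution_asymptotic {lam a : ℝ} (hlam : 0 < lam) (ha : 1 < a)
    (s : ℝ → ℝ)
    (hs : ∀ E ∈ Set.Ioo (0 : ℝ) 1,
      lam < s E ∧ (s E - lam) * Real.log (s E / lam) = a * Real.log (1 / E)) :
    Tendsto (fun E : ℝ => Real.log ((⌊s E⌋ : ℝ)) / Real.log (Real.log (1 / E)))
      (nhdsWithin 0 (Set.Ioi 0)) (nhds 1) := by
  have ht : Tendsto (fun E : ℝ ↦ log (1 / E)) (𝓝[>] 0) atTop := by
    simp only [one_div, log_inv]
    exact tendsto_neg_atBot_atTop.comp tendsto_log_nhdsGT_zero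
  have hs' : ∀ᶠ E in 𝓝[>] 0, lam < s E ∧ (s E - lam) * log (s E / lam) = a * log (1 / E) :=
    eventually_mem_set.2 (Ioo_mem_nhdsGT one_pos) |>.mono hs
  have hs_top : Tendsto s (𝓝[>] 0) atTop := by
    have hsub : Tendsto (fun E ↦ s E - lam) (𝓝[>] 0) atTop := by
      refine tendsto_atTop_mono' _ ?_ <|
        tendsto_sqrt_atTop.comp <| (ht.const_mul_atTop (by linarith)).const_mul_atTop hlam
      filter_upwards [hs'] with E ⟨hlt, heq⟩
      simpa only [Function.comp, heq] using sqrt_mul_sub_mul_log_div_le hlam hlt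
    simpa using tendsto_atTop_add_const_right _ lam hsub
  have hlog_s : (fun E ↦ log (s E)) ~[𝓝[>] 0] fun E ↦ log (a * log (1 / E)) :=
    (isEquivalent_log_sub_mul_log_div hlam).symm.comp_tendsto hs_top
      |>.congr_right (hs'.mono fun E hE ↦ by simp only [Function.comp, hE.2])
  have hequiv : (fun E ↦ log (⌊s E⌋ : ℝ)) ~[𝓝[>] 0] fun E ↦ log (log (1 / E)) :=
    ((isEquivalent_intFloor (R := ℝ)).comp_tendsto hs_top).log hs_top |>.trans hlog_s
      |>.trans (isEquivalent_log_const_mul (by linarith) ht)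
  exact (isEquivalent_iff_tendsto_one <|
    (tendsto_log_atTop.comp ht).eventually_ne_atTop 0).1 hequiv
end

section
/- Fix λ > 0 and a > 1. For E ∈ (0,1), let s(E) be the unique real number s > λ satisfying (s − λ)·log(s/λ) = a·log(1/E), and set η(E) := ⌊s(E)⌋. Then lim_{E → 0⁺} η(E) · (log log(1/E)) / (a·log(1/E)) = 1. -/
/-!
Write `T = a log(1/E) → ∞`. The equation forces `s → ∞` (it gives `λT ≤ s²`), and then
`T = (s - λ) log(s/λ) ~ s log s`. Taking logarithms, `log T ~ log s + log log s ~ log s`, so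
`s log T ~ s log s ~ T`. Finally `⌊s⌋ ~ s` and `log log(1/E) = log T - log a ~ log T`.
-/

open Filter Asymptotics Real Topology

theorem Asymptotics.isEquivalent_intFloor_atTop :
    (fun x : ℝ => (⌊x⌋ : ℝ)) ~[atTop] id := by
  have hbdd : (fun x : ℝ => (⌊x⌋ : ℝ) - x) =O[atTop] fun _ => (1 : ℝ) :=
    IsBigO.of_bound 1 <| Eventually.of_forall fun x => by
      rw [norm_one, mul_one, Real.norm_eq_abs, abs_le]
      constructor <;> linarith [Int.floor_le x, Int.sub_one_lt_floor x]
  exact hbdd.trans_isLittleO ((isLittleO_one_left_iff ℝ).mpr tendsto_norm_atTop_atTop)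

section

variable {α : Type*} {l : Filter α} {lam : ℝ} {s T : α → ℝ}

theorem tendsto_atTop_of_sub_mul_log_div_eq (hlam : 0 < lam) (hT : Tendsto T l atTop)
    (hs : ∀ᶠ x in l, lam < s x ∧ (s x - lam) * log (s x / lam) = T x) :
    Tendsto s l atTop := by
  refine tendsto_atTop_mono' l ?_ (tendsto_sqrt_atTop.comp (hT.const_mul_atTop hlam))
  filter_upwards [hs] with x ⟨hlt, heq⟩
  have hs0 : 0 < s x := hlam.trans hlt
  have hlog : log (s x / lam) ≤ s x / lam :=
    (log_le_sub_one_of_pos (div_pos hs0 hlam)).trans (by linarith)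
  have hbound : lam * T x ≤ s x ^ 2 := by
    rw [← heq]
    calc lam * ((s x - lam) * log (s x / lam)) ≤ lam * (s x * (s x / lam)) := by
          gcongr
          · exact log_nonneg ((one_le_div hlam).mpr hlt.le)
          · linarith
      _ = s x ^ 2 := by field_simp
  simpa [sqrt_sq hs0.le] using sqrt_le_sqrt hbound

theorem sub_mul_log_div_isEquivalent (hlam : lam ≠ 0) (hs : Tendsto s l atTop) :
    (fun x => (s x - lam) * log (s x / lam)) ~[l] fun x => s x * log (s x) := by
  have hlogs : Tendsto (fun x => log (s x)) l atTop := tendsto_log_atTop.comp hs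
  have hsub : (fun x => s x - lam) ~[l] s := by
    simpa only [sub_eq_add_neg] using
      IsEquivalent.refl.add_const_of_norm_tendsto_atTop (tendsto_norm_atTop_atTop.comp hs)
  have hlog : (fun x => log (s x / lam)) ~[l] fun x => log (s x) := by
    refine (IsEquivalent.refl.add_const_of_norm_tendsto_atTop (c := -log lam)
      (tendsto_norm_atTop_atTop.comp hlogs)).congr_left ?_
    filter_upwards [hs.eventually_gt_atTop 0] with x hx
    rw [log_div hx.ne' hlam, sub_eq_add_neg]
  exact hsub.mul hlog

theorem log_mul_log_isEquivalent_log {u : α → ℝ} (hu : Tendsto u l atTop) :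
    (fun x => log (u x * log (u x))) ~[l] fun x => log (u x) := by
  have hloglog : (fun x => log (log (u x))) =o[l] fun x => log (u x) :=
    isLittleO_log_id_atTop.comp_tendsto (tendsto_log_atTop.comp hu)
  refine (IsEquivalent.refl.add_isLittleO hloglog).congr_left ?_
  filter_upwards [hu.eventually_gt_atTop 1] with x hx
  rw [Pi.add_apply, log_mul (by positivity) (log_pos hx).ne']

theorem mul_log_isEquivalent_of_sub_mul_log_div_eq (hlam : 0 < lam) (hT : Tendsto T l atTop)
    (hs : ∀ᶠ x in l, lam < s x ∧ (s x - lam) * log (s x / lam) = T x) :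
    (fun x => s x * log (T x)) ~[l] T := by
  have hs_top := tendsto_atTop_of_sub_mul_log_div_eq hlam hT hs
  have hT_equiv : T ~[l] fun x => s x * log (s x) :=
    (sub_mul_log_div_isEquivalent hlam.ne' hs_top).congr_left (hs.mono fun x hx => hx.2)
  have hlogT : (fun x => log (T x)) ~[l] fun x => log (s x) :=
    (hT_equiv.symm.log hT).symm.trans (log_mul_log_isEquivalent_log hs_top)
  exact (IsEquivalent.refl.mul hlogT).trans hT_equiv.symm

end

theorem floor_solution_asymptotic {lam a : ℝ} (hlam : 0 < lam) (ha : 1 < a)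
    (s : ℝ → ℝ)
    (hs : ∀ E ∈ Set.Ioo (0 : ℝ) 1,
      lam < s E ∧ (s E - lam) * Real.log (s E / lam) = a * Real.log (1 / E)) :
    Tendsto
      (fun E : ℝ => (⌊s E⌋ : ℝ) * Real.log (Real.log (1 / E)) / (a * Real.log (1 / E)))
      (nhdsWithin 0 (Set.Ioi 0)) (nhds 1) := by
  have ha0 : 0 < a := by linarith
  have hlog : Tendsto (fun E : ℝ => log (1 / E)) (𝓝[>] 0) atTop := by
    simpa only [one_div, Function.comp_def] using tendsto_log_atTop.comp tendsto_inv_nhdsGT_zero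
  have hT := hlog.const_mul_atTop ha0
  have hs' : ∀ᶠ E in 𝓝[>] 0, lam < s E ∧ (s E - lam) * log (s E / lam) = a * log (1 / E) :=
    eventually_of_mem (Ioo_mem_nhdsGT one_pos) hs
  have hfloor : (fun E => (⌊s E⌋ : ℝ)) ~[𝓝[>] 0] s :=
    isEquivalent_intFloor_atTop.comp_tendsto (tendsto_atTop_of_sub_mul_log_div_eq hlam hT hs')
  have hloglog : (fun E => log (log (1 / E))) ~[𝓝[>] 0] fun E => log (a * log (1 / E)) := by
    refine IsEquivalent.symm <|
      (IsEquivalent.refl.add_const_of_norm_tendsto_atTop (c := log a)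
        (tendsto_norm_atTop_atTop.comp (tendsto_log_atTop.comp hlog))).congr_left ?_
    filter_upwards [hlog.eventually_gt_atTop 0] with E hE
    rw [log_mul ha0.ne' hE.ne', add_comm]
    rfl
  refine (isEquivalent_iff_tendsto_one (hT.eventually_ne_atTop 0)).mp ?_
  exact (hfloor.mul hloglog).trans (mul_log_isEquivalent_of_sub_mul_log_div_eq hlam hT hs')
end

section
/- Fix λ > 0 and a > 1. For E ∈ (0,1), let s(E) be the unique real number s > λ satisfying (s − λ)·log(s/λ) = a·log(1/E), and set η(E) := ⌊s(E)⌋. Then limsup_{E → 0⁺} e^{η(E) − λ} · E^{a / log(η(E)/λ)} ≤ 1. -/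
/-! For small `E` we have `a log (1/E) ≥ log ((λ+1)/λ)`, so `s(E) ≥ λ + 1` and `n = ⌊s(E)⌋`
satisfies `λ < n ≤ s(E)`. Then `log (n/λ) ≤ log (s/λ)`, and the logarithm of the expression is
`n - λ - (s - λ) · log (s/λ) / log (n/λ) ≤ n - s ≤ 0`: the expression is eventually at most `1`. -/

open Filter Real Set Topology

lemma strictMonoOn_sub_mul_log_div {lam : ℝ} (hlam : 0 < lam) :
    StrictMonoOn (fun t => (t - lam) * log (t / lam)) (Ici lam) := by
  intro x hx y hy hxy
  simp only [mem_Ici] at hx hy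
  have hlog : log (x / lam) ≤ log (y / lam) :=
    log_le_log (div_pos (by linarith) hlam) (div_le_div_of_nonneg_right hxy.le hlam.le)
  have hlogy : 0 < log (y / lam) := log_pos ((one_lt_div hlam).2 (by linarith))
  calc (x - lam) * log (x / lam) ≤ (x - lam) * log (y / lam) :=
        mul_le_mul_of_nonneg_left hlog (by linarith)
    _ < (y - lam) * log (y / lam) := mul_lt_mul_of_pos_right (by linarith) hlogy

lemma eventually_add_one_le {lam a : ℝ} (hlam : 0 < lam) (ha : 0 < a) {s : ℝ → ℝ}
    (hs : ∀ E ∈ Ioo (0 : ℝ) 1,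
      lam < s E ∧ (s E - lam) * log (s E / lam) = a * log (1 / E)) :
    ∀ᶠ E in 𝓝[>] 0, lam + 1 ≤ s E := by
  have htend : Tendsto (fun E => a * log (1 / E)) (𝓝[>] 0) atTop := by
    simpa only [one_div, log_inv, Function.comp_apply] using
      (tendsto_neg_atBot_atTop.comp tendsto_log_nhdsGT_zero).const_mul_atTop ha
  filter_upwards [htend.eventually_ge_atTop (log ((lam + 1) / lam)),
    Ioo_mem_nhdsGT one_pos] with E hC hE
  obtain ⟨hlt, heq⟩ := hs E hE
  refine ((strictMonoOn_sub_mul_log_div hlam).le_iff_le (by simp) (mem_Ici.2 hlt.le)).1 ?_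
  simpa [heq] using hC

lemma exp_sub_mul_rpow_le_one {lam a n s E : ℝ} (hlam : 0 < lam) (hn : lam < n) (hns : n ≤ s)
    (hE : 0 < E) (hsE : (s - lam) * log (s / lam) = a * log (1 / E)) :
    exp (n - lam) * E ^ (a / log (n / lam)) ≤ 1 := by
  have hlogn : 0 < log (n / lam) := log_pos ((one_lt_div hlam).2 hn)
  have hratio : 1 ≤ log (s / lam) / log (n / lam) :=
    (one_le_div hlogn).2 <|
      log_le_log (div_pos (hlam.trans hn) hlam) (div_le_div_of_nonneg_right hns hlam.le)
  have hexponent :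
      log E * (a / log (n / lam)) = -((s - lam) * (log (s / lam) / log (n / lam))) := by
    rw [one_div, log_inv] at hsE
    field_simp
    linarith
  rw [rpow_def_of_pos hE, ← exp_add, exp_le_one_iff, hexponent]
  nlinarith [mul_le_mul_of_nonneg_left hratio (by linarith : 0 ≤ s - lam)]

theorem floor_solution_exp_limsup {lam a : ℝ} (hlam : 0 < lam) (ha : 1 < a)
    (s : ℝ → ℝ)
    (hs : ∀ E ∈ Set.Ioo (0 : ℝ) 1,
      lam < s E ∧ (s E - lam) * Real.log (s E / lam) = a * Real.log (1 / E)) :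
    Filter.limsup
      (fun E : ℝ =>
        Real.exp ((⌊s E⌋ : ℝ) - lam) * E ^ (a / Real.log ((⌊s E⌋ : ℝ) / lam)))
      (nhdsWithin 0 (Set.Ioi 0)) ≤ 1 := by
  refine limsup_le_of_le ?_ ?_
  · refine isCoboundedUnder_le_of_eventually_le _ (x := 0) ?_
    filter_upwards [self_mem_nhdsWithin] with E (hE : 0 < E)
    positivity
  · filter_upwards [eventually_add_one_le hlam (by linarith) hs, Ioo_mem_nhdsGT one_pos]
      with E hs1 hE
    exact exp_sub_mul_rpow_le_one hlam (by linarith [Int.sub_one_lt_floor (s E)])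
      (Int.floor_le _) hE.1 (hs E hE).2
end

section
/- Let X be a nonnegative real random variable with finite mean satisfying E[X] ≤ E for some E > 0, and let t > 0. Then E[X² · Q(X − t) + t² · Q(t − X)] ≤ E·t + t·φ(t) + (2 + 1/√(2π))·E. -/
open MeasureTheory

/-- The standard normal density. -/
noncomputable def stdNormalPDF (x : ℝ) : ℝ :=
  (1 / Real.sqrt (2 * Real.pi)) * Real.exp (-x ^ 2 / 2)

/-- The standard normal tail function `Q(x) = ∫_x^∞ φ(u) du`. -/
noncomputable def stdNormalQ (x : ℝ) : ℝ :=
  ∫ u in Set.Ioi x, stdNormalPDF u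

/-! Since `Q(x) + Q(-x) = 1`, the integrand at `X = x` equals `m² + (m + M)(M - m) Q(M - m)` with
`m = min(x, t)`, `M = max(x, t)`, and Mills' inequality `s Q(s) ≤ φ(s)` bounds it by
`m² + (m + M) φ(M - m) ≤ (t + 2 + 1/√(2π)) x + t φ(t)`. The only delicate term is `t φ(t - x)`
for `x ≤ t/2`, where `φ(t - x) - φ(t) ≤ x t φ(t/2)` and `t² φ(t/2) ≤ 2`. Taking expectations and
using `E[X] ≤ E` gives the claim. -/

open Set Filter Topology Real ProbabilityTheory

lemma one_div_sqrt_two_mul_pi_le_half : 1 / √(2 * π) ≤ 1 / 2 := by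
  gcongr
  rw [le_sqrt zero_le_two (by positivity)]
  linarith [pi_gt_three]

lemma stdNormalPDF_eq_gaussianPDFReal : stdNormalPDF = gaussianPDFReal 0 1 := by
  ext x
  simp [stdNormalPDF, gaussianPDFReal]

lemma stdNormalPDF_nonneg (x : ℝ) : 0 ≤ stdNormalPDF x := by
  unfold stdNormalPDF; positivity

lemma stdNormalPDF_le (x : ℝ) : stdNormalPDF x ≤ 1 / √(2 * π) :=
  mul_le_of_le_one_right (by positivity) (exp_le_one_iff.mpr (by nlinarith [sq_nonneg x]))

lemma stdNormalPDF_neg (x : ℝ) : stdNormalPDF (-x) = stdNormalPDF x := by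
  simp [stdNormalPDF]

lemma stdNormalPDF_le_of_abs_le {a b : ℝ} (h : |a| ≤ |b|) : stdNormalPDF b ≤ stdNormalPDF a := by
  have hsq := sq_le_sq.mpr h
  exact mul_le_mul_of_nonneg_left (exp_le_exp.mpr (by linarith)) (by positivity)

lemma integrable_stdNormalPDF : Integrable stdNormalPDF := by
  rw [stdNormalPDF_eq_gaussianPDFReal]
  exact integrable_gaussianPDFReal 0 1

lemma integral_stdNormalPDF : ∫ x, stdNormalPDF x = 1 := by
  rw [stdNormalPDF_eq_gaussianPDFReal]
  exact integral_gaussianPDFReal_eq_one 0 one_ne_zero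

lemma hasDerivAt_stdNormalPDF (x : ℝ) :
    HasDerivAt stdNormalPDF (-(x * stdNormalPDF x)) x := by
  have h := (((hasDerivAt_pow 2 x).fun_neg.div_const 2).exp).const_mul (1 / √(2 * π))
  refine h.congr_deriv ?_
  simp only [stdNormalPDF]; ring

lemma tendsto_stdNormalPDF_atTop : Tendsto stdNormalPDF atTop (𝓝 0) := by
  have h : Tendsto (fun x : ℝ ↦ -x ^ 2 / 2) atTop atBot :=
    (tendsto_neg_atTop_atBot.comp (tendsto_pow_atTop two_ne_zero)).atBot_div_const two_pos
  have h' := (tendsto_exp_comp_nhds_zero.mpr h).const_mul (1 / √(2 * π))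
  rw [mul_zero] at h'
  exact h'

lemma integrable_mul_stdNormalPDF : Integrable fun x ↦ x * stdNormalPDF x := by
  refine ((integrable_mul_exp_neg_mul_sq (b := 1 / 2) (by norm_num)).const_mul
    (1 / √(2 * π))).congr (ae_of_all _ fun x ↦ ?_)
  simp only [stdNormalPDF]; ring_nf

lemma integral_Ioi_mul_stdNormalPDF (a : ℝ) :
    ∫ x in Ioi a, x * stdNormalPDF x = stdNormalPDF a := by
  have hderiv (x : ℝ) (_ : x ∈ Ici a) :
      HasDerivAt (fun y ↦ -stdNormalPDF y) (x * stdNormalPDF x) x := by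
    simpa using (hasDerivAt_stdNormalPDF x).fun_neg
  have h := integral_Ioi_of_hasDerivAt_of_tendsto' hderiv
    integrable_mul_stdNormalPDF.integrableOn (by simpa using tendsto_stdNormalPDF_atTop.neg)
  simpa using h

lemma stdNormalQ_nonneg (x : ℝ) : 0 ≤ stdNormalQ x :=
  setIntegral_nonneg measurableSet_Ioi fun u _ ↦ stdNormalPDF_nonneg u

lemma stdNormalQ_add_stdNormalQ_neg (x : ℝ) : stdNormalQ x + stdNormalQ (-x) = 1 := by
  have h : stdNormalQ (-x) = ∫ u in Iic x, stdNormalPDF u := by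
    rw [stdNormalQ, ← integral_comp_neg_Iic]
    simp_rw [stdNormalPDF_neg]
  rw [h, add_comm, stdNormalQ, intervalIntegral.integral_Iic_add_Ioi
    integrable_stdNormalPDF.integrableOn integrable_stdNormalPDF.integrableOn,
    integral_stdNormalPDF]

lemma mul_stdNormalQ_le (x : ℝ) : x * stdNormalQ x ≤ stdNormalPDF x := by
  rw [stdNormalQ, ← integral_const_mul, ← integral_Ioi_mul_stdNormalPDF x]
  refine setIntegral_mono_on (integrable_stdNormalPDF.integrableOn.const_mul x)
    integrable_mul_stdNormalPDF.integrableOn measurableSet_Ioi fun u hu ↦ ?_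
  exact mul_le_mul_of_nonneg_right hu.le (stdNormalPDF_nonneg u)

lemma stdNormalPDF_sub_le (u t : ℝ) :
    stdNormalPDF u - stdNormalPDF t ≤ (t ^ 2 - u ^ 2) / 2 * stdNormalPDF u := by
  have hφt : stdNormalPDF t = stdNormalPDF u * exp (-((t ^ 2 - u ^ 2) / 2)) := by
    simp only [stdNormalPDF]
    rw [mul_assoc, ← exp_add]
    ring_nf
  calc stdNormalPDF u - stdNormalPDF t
      = stdNormalPDF u * (1 - exp (-((t ^ 2 - u ^ 2) / 2))) := by rw [hφt]; ring
    _ ≤ stdNormalPDF u * ((t ^ 2 - u ^ 2) / 2) :=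
        mul_le_mul_of_nonneg_left (by linarith [add_one_le_exp (-((t ^ 2 - u ^ 2) / 2))])
          (stdNormalPDF_nonneg u)
    _ = (t ^ 2 - u ^ 2) / 2 * stdNormalPDF u := mul_comm _ _

lemma sq_mul_stdNormalPDF_half_le (t : ℝ) : t ^ 2 * stdNormalPDF (t / 2) ≤ 2 := by
  have hy : 2 * (t ^ 2 / 8) ≤ exp (t ^ 2 / 8) := by
    nlinarith [quadratic_le_exp_of_nonneg (by positivity : 0 ≤ t ^ 2 / 8),
      sq_nonneg (t ^ 2 / 8 - 1)]
  have hexp : t ^ 2 * exp (-(t / 2) ^ 2 / 2) ≤ 4 := by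
    rw [show -(t / 2) ^ 2 / 2 = -(t ^ 2 / 8) by ring, exp_neg, mul_inv_le_iff₀ (exp_pos _)]
    linarith
  calc t ^ 2 * stdNormalPDF (t / 2) = 1 / √(2 * π) * (t ^ 2 * exp (-(t / 2) ^ 2 / 2)) := by
        simp only [stdNormalPDF]; ring
    _ ≤ 1 / 2 * 4 := mul_le_mul one_div_sqrt_two_mul_pi_le_half hexp (by positivity) (by norm_num)
    _ = 2 := by norm_num

lemma mul_stdNormalPDF_sub_le {t x : ℝ} (hx : 0 ≤ x) (hxt : x ≤ t) :
    t * stdNormalPDF (t - x) ≤ t * stdNormalPDF t + 2 * x := by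
  have htφt : 0 ≤ t * stdNormalPDF t := mul_nonneg (hx.trans hxt) (stdNormalPDF_nonneg t)
  rcases le_total t (2 * x) with hlarge | hsmall
  · have h := mul_le_mul_of_nonneg_left
      ((stdNormalPDF_le (t - x)).trans one_div_sqrt_two_mul_pi_le_half) (hx.trans hxt)
    linarith
  · -- On `[t/2, t]` the density varies by at most `x * t * φ(t/2)`, and `t² φ(t/2) ≤ 2`.
    have hdiff : stdNormalPDF (t - x) - stdNormalPDF t ≤ x * t * stdNormalPDF (t / 2) := by
      calc stdNormalPDF (t - x) - stdNormalPDF t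
          ≤ (t ^ 2 - (t - x) ^ 2) / 2 * stdNormalPDF (t - x) := stdNormalPDF_sub_le _ _
        _ ≤ x * t * stdNormalPDF (t / 2) := by
            refine mul_le_mul (by nlinarith) (stdNormalPDF_le_of_abs_le ?_)
              (stdNormalPDF_nonneg _) (by nlinarith)
            rw [abs_of_nonneg (by linarith : 0 ≤ t / 2), abs_of_nonneg (by linarith : 0 ≤ t - x)]
            linarith
    have h := mul_le_mul_of_nonneg_left hdiff (hx.trans hxt)
    nlinarith [mul_le_mul_of_nonneg_left (sq_mul_stdNormalPDF_half_le t) hx]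

lemma sq_mul_stdNormalQ_sub_add_eq (a b : ℝ) :
    a ^ 2 * stdNormalQ (a - b) + b ^ 2 * stdNormalQ (b - a) =
      a ^ 2 + (a + b) * ((b - a) * stdNormalQ (b - a)) := by
  have h := stdNormalQ_add_stdNormalQ_neg (b - a)
  rw [neg_sub] at h
  linear_combination a ^ 2 * h

lemma sq_mul_stdNormalQ_sub_add_le {a b : ℝ} (ha : 0 ≤ a) (hab : a ≤ b) :
    a ^ 2 * stdNormalQ (a - b) + b ^ 2 * stdNormalQ (b - a) ≤
      a ^ 2 + (a + b) * stdNormalPDF (b - a) := by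
  rw [sq_mul_stdNormalQ_sub_add_eq]
  gcongr
  · linarith
  · exact mul_stdNormalQ_le _

lemma sq_mul_stdNormalQ_sub_add_le_mul_add {t x : ℝ} (ht : 0 ≤ t) (hx : 0 ≤ x) :
    x ^ 2 * stdNormalQ (x - t) + t ^ 2 * stdNormalQ (t - x) ≤
      (t + 2 + 1 / √(2 * π)) * x + t * stdNormalPDF t := by
  have htφt : 0 ≤ t * stdNormalPDF t := mul_nonneg ht (stdNormalPDF_nonneg t)
  have hc := one_div_sqrt_two_mul_pi_le_half
  rcases le_total x t with hxt | htx
  · have hφ := mul_le_mul_of_nonneg_left (stdNormalPDF_le (t - x)) hx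
    nlinarith [sq_mul_stdNormalQ_sub_add_le hx hxt, mul_stdNormalPDF_sub_le hx hxt]
  · have hφ := mul_le_mul_of_nonneg_left (stdNormalPDF_le (x - t)) (add_nonneg ht hx)
    nlinarith [sq_mul_stdNormalQ_sub_add_le ht htx]

theorem expectation_Q_bound_general {Ω : Type*} [MeasurableSpace Ω] (P : Measure Ω)
    [IsProbabilityMeasure P] (X : Ω → ℝ) (hX : Integrable X P)
    (hXpos : ∀ᵐ ω ∂P, 0 ≤ X ω) {E : ℝ} (hmean : ∫ ω, X ω ∂P ≤ E)
    {t : ℝ} (ht : 0 < t) :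
    ∫ ω, ((X ω) ^ 2 * stdNormalQ (X ω - t) + t ^ 2 * stdNormalQ (t - X ω)) ∂P ≤
      E * t + t * stdNormalPDF t + (2 + 1 / Real.sqrt (2 * Real.pi)) * E := by
  set c := t + 2 + 1 / √(2 * π)
  have hbound : Integrable (fun ω ↦ c * X ω + t * stdNormalPDF t) P :=
    (hX.const_mul c).add (integrable_const _)
  calc ∫ ω, ((X ω) ^ 2 * stdNormalQ (X ω - t) + t ^ 2 * stdNormalQ (t - X ω)) ∂P
      ≤ ∫ ω, (c * X ω + t * stdNormalPDF t) ∂P := by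
        refine integral_mono_of_nonneg (ae_of_all _ fun ω ↦ ?_) hbound ?_
        · have := stdNormalQ_nonneg (X ω - t)
          have := stdNormalQ_nonneg (t - X ω)
          positivity
        · filter_upwards [hXpos] with ω hω
          exact sq_mul_stdNormalQ_sub_add_le_mul_add ht.le hω
    _ = c * ∫ ω, X ω ∂P + t * stdNormalPDF t := by
        rw [integral_add (hX.const_mul c) (integrable_const _), integral_const_mul]
        simp
    _ ≤ c * E + t * stdNormalPDF t := by gcongr
    _ = E * t + t * stdNormalPDF t + (2 + 1 / Real.sqrt (2 * Real.pi)) * E := by ring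

theorem expectation_Q_bound {Ω : Type*} [MeasurableSpace Ω] (P : Measure Ω)
    [IsProbabilityMeasure P] (X : Ω → ℝ) (hX : Integrable X P)
    (hXpos : ∀ᵐ ω ∂P, 0 ≤ X ω) {E : ℝ} (hE : 0 < E) (hmean : ∫ ω, X ω ∂P ≤ E)
    {t : ℝ} (ht : 0 < t) :
    ∫ ω, ((X ω) ^ 2 * stdNormalQ (X ω - t) + t ^ 2 * stdNormalQ (t - X ω)) ∂P ≤
      E * t + t * stdNormalPDF t + (2 + 1 / Real.sqrt (2 * Real.pi)) * E :=
  expectation_Q_bound_general P X hX hXpos hmean ht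
end

section
/- Fix a > 0. Then lim_{E → 0⁺} H_b( E / (a·√(log(1/E))) ) / ( E·√(log(1/E)) ) = 1/a, where H_b is the binary entropy function. -/
/-!
Put `t = log (1/E)` and `p = E / (a √t)`, so that `E √t = a t p`. Near `0` the binary entropy
is `H(p) ~ p log (1/p)`, because its second summand `-(1-p) log (1-p)` is only `~ p`. Since
`log (1/p) = t + log (a √t) ~ t`, the quotient is `H(p) / (a t p) ~ log (1/p) / (a t) → 1/a`.
-/

open Filter Topology
open Real hiding binEntropy

/-- The binary entropy function (natural logarithm). -/
noncomputable def binEntropy (p : ℝ) : ℝ :=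
  -p * Real.log p - (1 - p) * Real.log (1 - p)

lemma binEntropy_eq_negMulLog_add (p : ℝ) :
    binEntropy p = negMulLog p + negMulLog (1 - p) := by
  simp only [binEntropy, negMulLog]
  ring

lemma tendsto_negMulLog_one_sub_div_self :
    Tendsto (fun p => negMulLog (1 - p) / p) (𝓝[≠] 0) (𝓝 1) := by
  have hderiv : HasDerivAt (fun p => negMulLog (1 - p)) 1 0 := by
    have h : HasDerivAt negMulLog (-1) (1 - 0) := by
      simpa using hasDerivAt_negMulLog one_ne_zero
    simpa using h.comp_const_sub 1 0
  refine hderiv.tendsto_slope_zero.congr fun p => ?_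
  simp [div_eq_inv_mul]

lemma tendsto_log_one_div_nhdsGT_zero :
    Tendsto (fun x => log (1 / x)) (𝓝[>] 0) atTop := by
  refine (tendsto_log_atTop.comp tendsto_inv_nhdsGT_zero).congr fun x => ?_
  rw [Function.comp_apply, one_div]

lemma tendsto_binEntropy_div_mul_log_one_div :
    Tendsto (fun p => binEntropy p / (p * log (1 / p))) (𝓝[>] 0) (𝓝 1) := by
  have hsum := tendsto_const_nhds (x := (1 : ℝ)).add
    ((tendsto_negMulLog_one_sub_div_self.mono_left (nhdsGT_le_nhdsNE 0)).mul
      (tendsto_inv_atTop_zero.comp tendsto_log_one_div_nhdsGT_zero))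
  rw [mul_zero, add_zero] at hsum
  refine hsum.congr' ?_
  filter_upwards [self_mem_nhdsWithin, tendsto_log_one_div_nhdsGT_zero.eventually_gt_atTop 0]
    with p (hp : 0 < p) hL
  have hnegMulLog : negMulLog p = p * log (1 / p) := by rw [negMulLog, one_div, log_inv]; ring
  rw [binEntropy_eq_negMulLog_add, hnegMulLog, Function.comp_apply]
  generalize log (1 / p) = L at hL ⊢
  field_simp

lemma tendsto_log_mul_sqrt_div_self_atTop (c : ℝ) :
    Tendsto (fun t => log (c * √t) / t) atTop (𝓝 0) := by
  rcases eq_or_ne c 0 with rfl | hc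
  · simp
  have hlim := (tendsto_inv_atTop_zero.const_mul (log c)).add
    ((isLittleO_log_id_atTop.tendsto_div_nhds_zero).const_mul (1 / 2 : ℝ))
  rw [mul_zero, mul_zero, add_zero] at hlim
  refine hlim.congr' ?_
  filter_upwards [eventually_gt_atTop 0] with t ht
  rw [log_mul hc (sqrt_pos.mpr ht).ne', log_sqrt ht.le]
  simp only [id]
  ring

lemma tendsto_add_log_mul_sqrt_div_mul_self_atTop {a : ℝ} (ha : a ≠ 0) :
    Tendsto (fun t => (t + log (a * √t)) / (a * t)) atTop (𝓝 (1 / a)) := by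
  have h := ((tendsto_log_mul_sqrt_div_self_atTop a).const_add 1).div_const a
  rw [add_zero] at h
  refine h.congr' ?_
  filter_upwards [eventually_gt_atTop 0] with t ht
  field_simp

lemma Filter.Tendsto.div_atTop_nhdsGT_zero {α : Type*} {l : Filter α} {f g : α → ℝ}
    (hf : Tendsto f l (𝓝[>] 0)) (hg : Tendsto g l atTop) :
    Tendsto (fun x => f x / g x) l (𝓝[>] 0) := by
  refine tendsto_nhdsWithin_iff.2 ⟨(tendsto_nhds_of_tendsto_nhdsWithin hf).div_atTop hg, ?_⟩
  filter_upwards [(tendsto_nhdsWithin_iff.1 hf).2, hg.eventually_gt_atTop 0] with x hfx hgx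
  exact div_pos hfx hgx

theorem binEntropy_asymptotic {a : ℝ} (ha : 0 < a) :
    Filter.Tendsto
      (fun E : ℝ =>
        binEntropy (E / (a * Real.sqrt (Real.log (1 / E)))) /
          (E * Real.sqrt (Real.log (1 / E))))
      (nhdsWithin 0 (Set.Ioi 0)) (nhds (1 / a)) := by
  set t : ℝ → ℝ := fun E => log (1 / E)
  set p : ℝ → ℝ := fun E => E / (a * √(t E))
  have ht : Tendsto t (𝓝[>] 0) atTop := tendsto_log_one_div_nhdsGT_zero
  have hscale : Tendsto (fun E => a * √(t E)) (𝓝[>] 0) atTop :=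
    (tendsto_sqrt_atTop.comp ht).const_mul_atTop ha
  have hp : Tendsto p (𝓝[>] 0) (𝓝[>] 0) := tendsto_id.div_atTop_nhdsGT_zero hscale
  have hratio : Tendsto (fun E => log (1 / p E) / (a * t E)) (𝓝[>] 0) (𝓝 (1 / a)) := by
    refine ((tendsto_add_log_mul_sqrt_div_mul_self_atTop ha.ne').comp ht).congr' ?_
    filter_upwards [self_mem_nhdsWithin, hscale.eventually_gt_atTop 0] with E (hE : 0 < E) hs
    rw [Function.comp_apply, one_div_div, log_div hs.ne' hE.ne', add_comm, sub_eq_add_neg,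
      ← log_inv, ← one_div]
  have h := (tendsto_binEntropy_div_mul_log_one_div.comp hp).mul hratio
  rw [one_mul] at h
  refine h.congr' ?_
  filter_upwards [(tendsto_log_one_div_nhdsGT_zero.comp hp).eventually_gt_atTop 0,
    (tendsto_nhdsWithin_iff.1 hp).2, ht.eventually_gt_atTop 0] with E hL (hpE : 0 < p E) htE
  have hEt : E * √(t E) = p E * (a * t E) := by
    have hs : 0 < √(t E) := sqrt_pos.mpr htE
    simp only [p]
    field_simp
    rw [sq_sqrt htE.le]
  rw [Function.comp_apply] at hL
  show binEntropy (p E) / (p E * log (1 / p E)) * (log (1 / p E) / (a * t E)) =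
    binEntropy (p E) / (E * √(t E))
  rw [hEt]
  field_simp
end

section
/- Fix a dark current λ > 0 and a > 1. For E > 0 small, let η₀(E) be the unique real number s > λ satisfying s·log(s/λ) = a·log(1/E). Then lim_{E → 0⁺} H_b( E / η₀(E) ) / ( E·log log(1/E) ) = 1/a, where H_b is the binary entropy function. -/
/-! Write `η = η₀ E`, `L = log (1 / E)` and `p = E / η`. Up to an error in `[0, p]`, `H_b p` is
`-p log p = (E / η) (log η + L)`, and the defining equation turns `L / η` into
`log (η / λ) / a`. After division by `E log L` everything reduces to `log (η / λ) ~ log L`: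
`u = η / λ` solves `u log u = (a / λ) L`, and every solution of `u log u = y` with `u ≥ e`
satisfies `log y - log log y ≤ log u ≤ log y`. -/

open Filter Topology

section

variable {ι : Type*} {l : Filter ι}

namespace Real

lemma negMulLog_div_div_mul {x η : ℝ} (hx : 0 < x) (hη : 0 < η) (m : ℝ) :
    negMulLog (x / η) / (x * m) = log η / η * m⁻¹ + log (1 / x) / η / m := by
  rw [negMulLog, log_div hx.ne' hη.ne', one_div, log_inv]
  field_simp
  ring

lemma exp_one_le_of_exp_one_le_mul_log {u : ℝ} (hu : 0 < u) (h : exp 1 ≤ u * log u) :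
    exp 1 ≤ u := by
  by_contra! hlt
  have hlog : log u < 1 := (log_lt_iff_lt_exp hu).2 hlt
  nlinarith

lemma log_le_log_mul_log {u : ℝ} (hu : exp 1 ≤ u) : log u ≤ log (u * log u) := by
  have hu0 : 0 < u := (exp_pos 1).trans_le hu
  have hlog : 1 ≤ log u := (le_log_iff_exp_le hu0).2 hu
  exact log_le_log hu0 (le_mul_of_one_le_right hu0.le hlog)

lemma log_mul_log_sub_log_log_le {u : ℝ} (hu : exp 1 ≤ u) :
    log (u * log u) - log (log (u * log u)) ≤ log u := by
  have hu0 : 0 < u := (exp_pos 1).trans_le hu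
  have hlog : 1 ≤ log u := (le_log_iff_exp_le hu0).2 hu
  have hloglog : log (log u) ≤ log (log (u * log u)) :=
    log_le_log (by linarith) (log_le_log_mul_log hu)
  have := log_mul hu0.ne' (by linarith : log u ≠ 0)
  linarith

lemma tendsto_log_div_log_of_mul_log_eq {u y : ι → ℝ} (hy : Tendsto y l atTop)
    (hu : ∀ᶠ i in l, 0 < u i ∧ u i * log (u i) = y i) :
    Tendsto (fun i => log (u i) / log (y i)) l (𝓝 1) := by
  have hlogy : Tendsto (fun i => log (y i)) l atTop := tendsto_log_atTop.comp hy
  have hlower : Tendsto (fun i => (log (y i) - log (log (y i))) / log (y i)) l (𝓝 1) := by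
    have := (isLittleO_log_id_atTop.tendsto_div_nhds_zero.comp hlogy).const_sub 1
    rw [sub_zero] at this
    refine this.congr' ?_
    filter_upwards [hlogy.eventually_ne_atTop 0] with i hi
    simp [sub_div, div_self hi]
  have hbounds : ∀ᶠ i in l, (log (y i) - log (log (y i))) / log (y i) ≤ log (u i) / log (y i)
      ∧ log (u i) / log (y i) ≤ 1 := by
    filter_upwards [hu, hy.eventually_ge_atTop (exp 1), hlogy.eventually_gt_atTop 0]
      with i ⟨hpos, heq⟩ hye hlogy
    have he : exp 1 ≤ u i := exp_one_le_of_exp_one_le_mul_log hpos (heq ▸ hye)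
    rw [← heq]
    exact ⟨div_le_div_of_nonneg_right (log_mul_log_sub_log_log_le he) (heq ▸ hlogy.le),
      div_le_one_of_le₀ (log_le_log_mul_log he) (heq ▸ hlogy.le)⟩
  exact tendsto_of_tendsto_of_tendsto_of_le_of_le' hlower tendsto_const_nhds
    (hbounds.mono fun _ h => h.1) (hbounds.mono fun _ h => h.2)

lemma tendsto_log_const_mul_div_log {c : ℝ} (hc : 0 < c) {L : ι → ℝ}
    (hL : Tendsto L l atTop) :
    Tendsto (fun i => log (c * L i) / log (L i)) l (𝓝 1) := by
  have hlogL : Tendsto (fun i => log (L i)) l atTop := tendsto_log_atTop.comp hL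
  have := (tendsto_const_nhds (x := log c)).div_atTop hlogL |>.add_const 1
  rw [zero_add] at this
  refine this.congr' ?_
  filter_upwards [hL.eventually_gt_atTop 0, hlogL.eventually_ne_atTop 0] with i hL0 hlog0
  rw [log_mul hc.ne' hL0.ne', add_div, div_self hlog0]

lemma tendsto_log_div_div_log_of_mul_log_div_eq {lam a : ℝ} (hlam : 0 < lam) (ha : 0 < a)
    {L η : ι → ℝ} (hL : Tendsto L l atTop)
    (hη : ∀ᶠ i in l, lam < η i ∧ η i * log (η i / lam) = a * L i) :
    Tendsto (fun i => log (η i / lam) / log (L i)) l (𝓝 1) := by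
  have hy : Tendsto (fun i => a / lam * L i) l atTop := hL.const_mul_atTop (div_pos ha hlam)
  have hu : ∀ᶠ i in l, 0 < η i / lam ∧ η i / lam * log (η i / lam) = a / lam * L i := by
    filter_upwards [hη] with i ⟨hlt, heq⟩
    refine ⟨div_pos (hlam.trans hlt) hlam, ?_⟩
    rw [div_mul_eq_mul_div, heq, mul_div_right_comm]
  have := (tendsto_log_div_log_of_mul_log_eq hy hu).mul
    (tendsto_log_const_mul_div_log (div_pos ha hlam) hL)
  rw [one_mul] at this
  refine this.congr' ?_
  filter_upwards [(tendsto_log_atTop.comp hy).eventually_ne_atTop 0] with i hi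
  exact div_mul_div_cancel₀ hi

lemma tendsto_atTop_of_mul_log_div_eq {lam a : ℝ} (hlam : 0 < lam) (ha : 0 < a)
    {L η : ι → ℝ} (hL : Tendsto L l atTop)
    (hη : ∀ᶠ i in l, lam < η i ∧ η i * log (η i / lam) = a * L i) :
    Tendsto η l atTop := by
  have hlog : Tendsto (fun i => log (η i / lam)) l atTop := (tendsto_log_atTop.comp hL).num
    one_pos (tendsto_log_div_div_log_of_mul_log_div_eq hlam ha hL hη)
  have hratio : Tendsto (fun i => η i / lam) l atTop := tendsto_atTop_mono' l
    (hη.mono fun i h => log_le_self (div_pos (hlam.trans h.1) hlam).le) hlog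
  simpa [mul_div_cancel₀ _ hlam.ne'] using hratio.const_mul_atTop hlam

end Real

lemma binEntropy_sub_negMulLog_mem_Icc {p : ℝ} (hp₀ : 0 ≤ p) (hp₁ : p ≤ 1) :
    binEntropy p - Real.negMulLog p ∈ Set.Icc 0 p := by
  have h : binEntropy p - Real.negMulLog p = Real.negMulLog (1 - p) := by
    simp only [binEntropy, Real.negMulLog]; ring
  rw [h]
  exact ⟨Real.negMulLog_nonneg (by linarith) (by linarith),
    (Real.negMulLog_le_one_sub_self (by linarith)).trans_eq (by ring)⟩

lemma tendsto_binEntropy_sub_negMulLog_div {x η m : ι → ℝ} (hη : Tendsto η l atTop)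
    (hm : Tendsto m l atTop) (hx : ∀ᶠ i in l, 0 < x i ∧ x i ≤ η i) :
    Tendsto (fun i => (binEntropy (x i / η i) - Real.negMulLog (x i / η i)) / (x i * m i))
      l (𝓝 0) := by
  have hbounds : ∀ᶠ i in l,
      0 ≤ (binEntropy (x i / η i) - Real.negMulLog (x i / η i)) / (x i * m i) ∧
        (binEntropy (x i / η i) - Real.negMulLog (x i / η i)) / (x i * m i) ≤
          (η i * m i)⁻¹ := by
    filter_upwards [hx, hη.eventually_gt_atTop 0, hm.eventually_gt_atTop 0]
      with i ⟨hx₀, hxη⟩ hη₀ hm₀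
    have hp := binEntropy_sub_negMulLog_mem_Icc (div_nonneg hx₀.le hη₀.le)
      ((div_le_one hη₀).2 hxη)
    refine ⟨div_nonneg hp.1 (by positivity), ?_⟩
    calc _ ≤ x i / η i / (x i * m i) := by gcongr; exact hp.2
      _ = (η i * m i)⁻¹ := by field_simp
  exact tendsto_of_tendsto_of_tendsto_of_le_of_le' tendsto_const_nhds
    (hη.atTop_mul_atTop₀ hm).inv_tendsto_atTop
    (hbounds.mono fun _ h => h.1) (hbounds.mono fun _ h => h.2)

end

theorem binEntropy_poisson_asymptotic {lam a : ℝ} (hlam : 0 < lam) (ha : 1 < a)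
    (η₀ : ℝ → ℝ)
    (hη₀ : ∀ E ∈ Set.Ioo (0 : ℝ) 1,
      lam < η₀ E ∧ η₀ E * Real.log (η₀ E / lam) = a * Real.log (1 / E)) :
    Filter.Tendsto
      (fun E : ℝ => binEntropy (E / η₀ E) / (E * Real.log (Real.log (1 / E))))
      (nhdsWithin 0 (Set.Ioi 0)) (nhds (1 / a)) := by
  have ha₀ : 0 < a := zero_lt_one.trans ha
  have hL : Tendsto (fun E : ℝ => Real.log (1 / E)) (𝓝[>] 0) atTop :=
    Real.tendsto_log_atTop.comp (tendsto_inv_nhdsGT_zero.congr fun E => (one_div E).symm)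
  have hm : Tendsto (fun E : ℝ => Real.log (Real.log (1 / E))) (𝓝[>] 0) atTop :=
    Real.tendsto_log_atTop.comp hL
  have hE : ∀ᶠ E in 𝓝[>] (0 : ℝ), E ∈ Set.Ioo 0 1 := Ioo_mem_nhdsGT one_pos
  have hη := hE.mono hη₀
  have hηtop := Real.tendsto_atTop_of_mul_log_div_eq hlam ha₀ hL hη
  have herr := tendsto_binEntropy_sub_negMulLog_div hηtop hm <| by
    filter_upwards [hE, hηtop.eventually_ge_atTop 1] with E hE hη₁
    exact ⟨hE.1, hE.2.le.trans hη₁⟩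
  have hlogη := Real.isLittleO_log_id_atTop.tendsto_div_nhds_zero.comp hηtop
  have hratio := Real.tendsto_log_div_div_log_of_mul_log_div_eq hlam ha₀ hL hη
  have hlim := herr.add ((hlogη.mul hm.inv_tendsto_atTop).add (hratio.div_const a))
  rw [mul_zero, zero_add, zero_add] at hlim
  refine hlim.congr' ?_
  filter_upwards [hE, hη] with E hE ⟨hlt, heq⟩
  have hη₀pos : 0 < η₀ E := hlam.trans hlt
  have hsubst : Real.log (η₀ E / lam) / a = Real.log (1 / E) / η₀ E := by
    field_simp; linarith
  simp only [Function.comp_apply, Pi.inv_apply, id, div_right_comm _ _ a, hsubst]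
  rw [← Real.negMulLog_div_div_mul hE.1 hη₀pos, ← add_div, sub_add_cancel]
end
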